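/- arXiv:2009.11338 — 3 statements merged into one kernel-verified Lean document; each statement's English description precedes it below -/
import Mathlib

section
/- Let C be an axis-aligned cube in ℝⁿ and S₁, S₂ ⊆ C two axis-disjoint measurable subsets with S₃ = C \ (S₁ ∪ S₂). Then vol(S₃) ≥ (c / (n log n)) · min{vol(S₁), vol(S₂)} for an absolute constant c > 0. -/
/-
Axis-disjointness means that every axis-parallel chord of the cube `C` through a point of `S₁`
misses `S₂`, hence lies in `S₁ ∪ S₃`. The Loomis–Whitney inequality then gives
`vol(S₁)ⁿ⁻¹ (2r)ⁿ ≤ (vol S₁ + vol S₃)ⁿ`, and likewise for `S₂`. If `vol S₃ ≤ ε vol Sₖ` for both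
`k`, each `Sₖ` therefore fills at least a `(1 + ε)⁻ⁿ` fraction of `C`, which is impossible for
disjoint sets once `(1 + ε)ⁿ < 2`. Finally `(1 + c/(n log n))ⁿ ≤ exp (c / log 2) < 2` when
`c < (log 2)²`.
-/

open MeasureTheory Set
open scoped ENNReal

/-- Two sets are axis-disjoint: no axis-parallel line meets both, i.e. any point of the
first and any point of the second differ in at least two coordinates. -/
def AxisDisjoint {n : ℕ} (S₁ S₂ : Set (Fin n → ℝ)) : Prop :=
  ∀ p ∈ S₁, ∀ q ∈ S₂, ¬∃ i : Fin n, ∀ j ≠ i, p j = q j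

open Function Metric

-- Loomis–Whitney (`lintegral_prod_lintegral_pow_le`) applied to the indicator of `V`.
theorem volume_pow_sub_one_mul_pow_le_of_le_volume_preimage_update {n : ℕ} (hn : 2 ≤ n)
    {U V : Set (Fin n → ℝ)} (hU : MeasurableSet U) (hV : MeasurableSet V) {ℓ : ℝ≥0∞}
    (hline : ∀ x ∈ U, ∀ i, ℓ ≤ volume (update x i ⁻¹' V)) :
    volume U ^ (n - 1) * ℓ ^ n ≤ volume V ^ n := by
  have hn₁ : (1 : ℝ) < n := by exact_mod_cast hn
  have hm : ((n - 1 : ℕ) : ℝ) = n - 1 := by rw [Nat.cast_sub (by omega), Nat.cast_one]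
  set p : ℝ := n / (n - 1)
  have hp : Real.HolderConjugate (Fintype.card (Fin n)) p := by
    rw [Fintype.card_fin]; exact Real.HolderConjugate.conjExponent hn₁
  have hpm : p * (n - 1) = n := div_mul_cancel₀ _ (by linarith)
  have hLW := lintegral_prod_lintegral_pow_le (fun _ ↦ volume) hp (measurable_one.indicator hV)
  simp only [← volume_pi, Fintype.card_fin, lintegral_indicator_one hV] at hLW
  have hsection : ∀ x i, ∫⁻ t, V.indicator 1 (update x i t) = volume (update x i ⁻¹' V) := by
    intro x i
    rw [← lintegral_indicator_one (measurable_update x hV)]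
    rfl
  have hlower : ∀ x ∈ U, ℓ ^ p ≤ ∏ i, (∫⁻ t, V.indicator 1 (update x i t)) ^ (1 / (n - 1 : ℝ)) := by
    intro x hx
    calc ℓ ^ p = ∏ _i : Fin n, ℓ ^ (1 / (n - 1 : ℝ)) := by
          rw [Finset.prod_const, Finset.card_univ, Fintype.card_fin, ← ENNReal.rpow_natCast,
            ← ENNReal.rpow_mul, one_div_mul_eq_div]
      _ ≤ _ := Finset.prod_le_prod' fun i _ ↦ by
          rw [hsection]; exact ENNReal.rpow_le_rpow (hline x hx i) (by positivity)
  have h : volume U * ℓ ^ p ≤ volume V ^ p :=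
    calc volume U * ℓ ^ p = ∫⁻ x in U, ℓ ^ p := by rw [setLIntegral_const, mul_comm]
      _ ≤ ∫⁻ x in U, ∏ i, (∫⁻ t, V.indicator 1 (update x i t)) ^ (1 / (n - 1 : ℝ)) :=
          setLIntegral_mono' hU hlower
      _ ≤ _ := (setLIntegral_le_lintegral _ _).trans hLW
  have := ENNReal.rpow_le_rpow h (z := n - 1) (by linarith)
  rwa [ENNReal.mul_rpow_of_nonneg _ _ (by linarith), ← ENNReal.rpow_mul, ← ENNReal.rpow_mul, hpm,
    ← hm, ENNReal.rpow_natCast, ENNReal.rpow_natCast, ENNReal.rpow_natCast] at this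

theorem update_mem_closedBall {ι : Type*} [Fintype ι] [DecidableEq ι] {X : ι → Type*}
    [∀ i, PseudoMetricSpace (X i)] {x y : ∀ i, X i} {r : ℝ} (hx : x ∈ closedBall y r) {i : ι}
    {t : X i} (ht : t ∈ closedBall (y i) r) : update x i t ∈ closedBall y r := by
  have hr : 0 ≤ r := nonempty_closedBall.1 ⟨t, ht⟩
  rw [closedBall_pi _ hr] at hx ⊢
  exact (update_mem_pi_iff_of_mem hx).2 fun _ ↦ ht

theorem ENNReal.pow_le_mul_one_add_pow {a s ε L : ℝ≥0∞} {n : ℕ} (hn : n ≠ 0) (ha₀ : a ≠ 0)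
    (ha : a ≠ ∞) (hs : s ≤ ε * a) (h : a ^ (n - 1) * L ^ n ≤ (a + s) ^ n) :
    L ^ n ≤ a * (1 + ε) ^ n := by
  refine (ENNReal.mul_le_mul_iff_right (pow_ne_zero (n - 1) ha₀) (pow_ne_top ha)).1 ?_
  calc a ^ (n - 1) * L ^ n ≤ (a + s) ^ n := h
    _ ≤ (a * (1 + ε)) ^ n := by gcongr; rw [mul_add, mul_one, mul_comm]; gcongr
    _ = a ^ (n - 1) * (a * (1 + ε) ^ n) := by rw [mul_pow, ← mul_assoc, pow_sub_one_mul hn]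

namespace AxisDisjoint

variable {n : ℕ} {S₁ S₂ : Set (Fin n → ℝ)}

theorem symm (h : AxisDisjoint S₁ S₂) : AxisDisjoint S₂ S₁ :=
  fun p hp q hq ⟨i, hi⟩ ↦ h q hq p hp ⟨i, fun j hj ↦ (hi j hj).symm⟩

theorem disjoint (hn : 0 < n) (h : AxisDisjoint S₁ S₂) : Disjoint S₁ S₂ :=
  disjoint_left.2 fun p hp hp' ↦ h p hp p hp' ⟨⟨0, hn⟩, fun _ _ ↦ rfl⟩

theorem update_notMem (h : AxisDisjoint S₁ S₂) {x : Fin n → ℝ} (hx : x ∈ S₁) (i : Fin n)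
    (t : ℝ) : update x i t ∉ S₂ :=
  fun hx' ↦ h x hx _ hx' ⟨i, fun _ hj ↦ (update_of_ne hj t x).symm⟩

variable {y : Fin n → ℝ} {r : ℝ}

theorem closedBall_subset_preimage_update (h : AxisDisjoint S₁ S₂) (hS₁ : S₁ ⊆ closedBall y r)
    {x : Fin n → ℝ} (hx : x ∈ S₁) (i : Fin n) :
    closedBall (y i) r ⊆ update x i ⁻¹' (S₁ ∪ closedBall y r \ (S₁ ∪ S₂)) := by
  intro t ht
  by_cases hx₁ : update x i t ∈ S₁
  · exact Or.inl hx₁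
  · exact Or.inr ⟨update_mem_closedBall (hS₁ hx) ht, by
      rintro (hx₁' | hx₂)
      exacts [hx₁ hx₁', h.update_notMem hx i t hx₂]⟩

theorem volume_pow_sub_one_mul_pow_le (hn : 2 ≤ n) (h : AxisDisjoint S₁ S₂)
    (hS₁m : MeasurableSet S₁) (hS₂m : MeasurableSet S₂) (hS₁ : S₁ ⊆ closedBall y r) :
    volume S₁ ^ (n - 1) * ENNReal.ofReal (2 * r) ^ n ≤
      (volume S₁ + volume (closedBall y r \ (S₁ ∪ S₂))) ^ n := by
  have hS₃m : MeasurableSet (closedBall y r \ (S₁ ∪ S₂)) :=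
    measurableSet_closedBall.diff (hS₁m.union hS₂m)
  rw [← measure_union (disjoint_sdiff_right.mono_left subset_union_left) hS₃m]
  refine volume_pow_sub_one_mul_pow_le_of_le_volume_preimage_update hn hS₁m (hS₁m.union hS₃m)
    fun x hx i ↦ ?_
  rw [← Real.volume_closedBall (y i)]
  exact measure_mono (h.closedBall_subset_preimage_update hS₁ hx i)

variable {ε : ℝ≥0∞}

theorem ofReal_pow_le_volume_mul (hn : 2 ≤ n) (h : AxisDisjoint S₁ S₂)
    (hS₁m : MeasurableSet S₁) (hS₂m : MeasurableSet S₂) (hS₁ : S₁ ⊆ closedBall y r)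
    (hS₁₀ : volume S₁ ≠ 0) (hS₃ : volume (closedBall y r \ (S₁ ∪ S₂)) ≤ ε * volume S₁) :
    ENNReal.ofReal (2 * r) ^ n ≤ volume S₁ * (1 + ε) ^ n :=
  ENNReal.pow_le_mul_one_add_pow (by omega) hS₁₀
    (measure_mono hS₁ |>.trans_lt measure_closedBall_lt_top).ne hS₃
    (h.volume_pow_sub_one_mul_pow_le hn hS₁m hS₂m hS₁)

theorem mul_min_volume_le_volume_closedBall_diff (hn : 2 ≤ n) (hr : 0 ≤ r)
    (h : AxisDisjoint S₁ S₂) (hS₁m : MeasurableSet S₁) (hS₂m : MeasurableSet S₂)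
    (hS₁ : S₁ ⊆ closedBall y r) (hS₂ : S₂ ⊆ closedBall y r) (hε : (1 + ε) ^ n < 2) :
    ε * min (volume S₁) (volume S₂) ≤ volume (closedBall y r \ (S₁ ∪ S₂)) := by
  by_contra! hlt
  set L := ENNReal.ofReal (2 * r) ^ n
  have hball : volume (closedBall y r) = L := by
    rw [Real.volume_pi_closedBall _ hr, ENNReal.ofReal_pow (by positivity), Fintype.card_fin]
  have hS₁₀ : volume S₁ ≠ 0 := fun h₀ ↦ by simp [h₀] at hlt
  have hS₂₀ : volume S₂ ≠ 0 := fun h₀ ↦ by simp [h₀] at hlt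
  have h₁ := h.ofReal_pow_le_volume_mul hn hS₁m hS₂m hS₁ hS₁₀
    (hlt.le.trans (mul_le_mul_right (min_le_left _ _) _))
  have h₂ := h.symm.ofReal_pow_le_volume_mul hn hS₂m hS₁m hS₂ hS₂₀
    (by rw [union_comm]; exact hlt.le.trans (mul_le_mul_right (min_le_right _ _) _))
  have hsum : volume S₁ + volume S₂ ≤ L := by
    rw [← measure_union (h.disjoint (by omega)) hS₂m, ← hball]
    exact measure_mono (union_subset hS₁ hS₂)
  have hL₀ : L ≠ 0 := ne_bot_of_le_ne_bot hS₁₀ (le_self_add.trans hsum)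
  have hL : L ≠ ∞ := ENNReal.pow_ne_top ENNReal.ofReal_ne_top
  refine hε.not_ge ((ENNReal.mul_le_mul_iff_right hL₀ hL).1 ?_)
  calc L * 2 = L + L := mul_two L
    _ ≤ volume S₁ * (1 + ε) ^ n + volume S₂ * (1 + ε) ^ n := add_le_add h₁ h₂
    _ = (volume S₁ + volume S₂) * (1 + ε) ^ n := (add_mul _ _ _).symm
    _ ≤ L * (1 + ε) ^ n := by gcongr

end AxisDisjoint

theorem one_add_div_mul_log_pow_lt_two {n : ℕ} (hn : 2 ≤ n) {c : ℝ} (hc₀ : 0 ≤ c)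
    (hc : c < Real.log 2 ^ 2) : (1 + c / (n * Real.log n)) ^ n < 2 := by
  have hlog₂ : 0 < Real.log 2 := Real.log_pos one_lt_two
  have hlog : Real.log 2 ≤ Real.log n := Real.log_le_log two_pos (by exact_mod_cast hn)
  have hn₀ : (n : ℝ) ≠ 0 := by positivity
  calc (1 + c / (n * Real.log n)) ^ n ≤ Real.exp (c / (n * Real.log n)) ^ n := by
        gcongr
        linarith [Real.add_one_le_exp (c / (n * Real.log n))]
    _ = Real.exp (c / Real.log n) := by
        rw [← Real.exp_nat_mul, mul_div_assoc', mul_div_mul_left _ _ hn₀]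
    _ ≤ Real.exp (c / Real.log 2) := by gcongr
    _ < Real.exp (Real.log 2) := by
        gcongr
        rwa [div_lt_iff₀ hlog₂, ← sq]
    _ = 2 := Real.exp_log two_pos

/-- cube isoperimetry: for an axis-aligned cube `C` in ℝⁿ and axis-disjoint
measurable subsets `S₁, S₂ ⊆ C` with `S₃ = C \ (S₁ ∪ S₂)`,
`vol(S₃) ≥ (c/(n log n)) · min{vol(S₁), vol(S₂)}` for an absolute constant `c > 0`. -/
theorem cube_isoperimetry :
    ∃ c > (0 : ℝ), ∀ (n : ℕ) (y : Fin n → ℝ) (r : ℝ), 0 < r →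
      ∀ S₁ S₂ : Set (Fin n → ℝ), MeasurableSet S₁ → MeasurableSet S₂ →
        S₁ ⊆ {x | ∀ i, |x i - y i| ≤ r} → S₂ ⊆ {x | ∀ i, |x i - y i| ≤ r} →
        AxisDisjoint S₁ S₂ →
        volume ({x : Fin n → ℝ | ∀ i, |x i - y i| ≤ r} \ (S₁ ∪ S₂)) ≥
          ENNReal.ofReal (c / (n * Real.log n)) * min (volume S₁) (volume S₂) := by
  refine ⟨1 / 10, by norm_num, fun n y r hr S₁ S₂ hS₁m hS₂m hS₁ hS₂ h ↦ ?_⟩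
  rcases lt_or_ge n 2 with hn | hn
  · -- the coefficient is `c / (n * log n) = 0`, as `log 0 = log 1 = 0`
    interval_cases n <;> simp
  have hcube : {x : Fin n → ℝ | ∀ i, |x i - y i| ≤ r} = closedBall y r := by
    ext x
    simp only [mem_ofPred_eq, mem_closedBall, dist_pi_le_iff hr.le, Real.dist_eq]
  rw [hcube] at hS₁ hS₂ ⊢
  refine h.mul_min_volume_le_volume_closedBall_diff hn hr.le hS₁m hS₂m hS₁ hS₂ ?_
  have hc : (1 / 10 : ℝ) < Real.log 2 ^ 2 := by nlinarith [Real.log_two_gt_d9]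
  rw [← ENNReal.ofReal_one, ← ENNReal.ofReal_add zero_le_one (by positivity),
    ← ENNReal.ofReal_pow (by positivity), ← ENNReal.ofReal_ofNat 2]
  exact ENNReal.ofReal_lt_ofReal_iff'.2 ⟨one_add_div_mul_log_pow_lt_two hn (by norm_num) hc, two_pos⟩
end

section
/- For a lazy reversible Markov chain, the conductance of any set is at least the reciprocal of the mixing time: if the chain mixes to within total variation distance 1/4 of stationarity in t steps from any start, then φ ≥ c/t for an absolute constant c. -/
open MeasureTheory ProbabilityTheory
open scoped ENNReal

/-!
Start the chain from `Q` restricted to `S`. By stationarity its law after `k` steps stays below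
`Q`, so in each step at most the flow `∫_S P x Sᶜ dQ` enters `Sᶜ` from `S`: after `t` steps the
mass in `Sᶜ` is at most `t` times this flow. On the other hand `Q Sᶜ ≥ 1/2`, so mixing forces
every `t`-step distribution to give `Sᶜ` mass at least `1/4`, and the mass in `Sᶜ` after `t`
steps is at least `Q S / 4`. Hence `φ(S) ≥ 1/(4t)`.
-/

/-- The `t`-step kernel of a Markov chain with one-step kernel `P`. -/
noncomputable def iterKernel {Ω : Type} [MeasurableSpace Ω] (P : Kernel Ω Ω) :
    ℕ → Kernel Ω Ω
  | 0 => Kernel.id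
  | k + 1 => (iterKernel P k).comp P

lemma MeasureTheory.Measure.bind_mono_measure {α β : Type*} [MeasurableSpace α]
    [MeasurableSpace β] {μ ν : Measure α} (κ : Kernel α β) (h : μ ≤ ν) : κ ∘ₘ μ ≤ κ ∘ₘ ν :=
  Measure.le_iff.2 fun A hA => by
    simp only [Measure.bind_apply hA κ.aemeasurable]
    exact lintegral_mono' h le_rfl

section Escape

variable {Ω : Type} [MeasurableSpace Ω] {P : Kernel Ω Ω} {ν Q : Measure Ω} {S : Set Ω}

lemma bind_iterKernel_succ (k : ℕ) :
    iterKernel P (k + 1) ∘ₘ ν = iterKernel P k ∘ₘ (P ∘ₘ ν) :=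
  Measure.comp_assoc.symm

lemma bind_apply_compl_le [IsMarkovKernel P] (hν : ν ≤ Q) (hS : MeasurableSet S) :
    (P ∘ₘ ν) Sᶜ ≤ ν Sᶜ + ∫⁻ x in S, P x Sᶜ ∂Q :=
  calc (P ∘ₘ ν) Sᶜ = ∫⁻ x in S, P x Sᶜ ∂ν + ∫⁻ x in Sᶜ, P x Sᶜ ∂ν := by
        rw [Measure.bind_apply hS.compl P.aemeasurable, lintegral_add_compl _ hS]
    _ ≤ ∫⁻ x in S, P x Sᶜ ∂Q + ∫⁻ _ in Sᶜ, 1 ∂ν :=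
        add_le_add (lintegral_mono' (Measure.restrict_mono le_rfl hν) le_rfl)
          (lintegral_mono fun _ => prob_le_one)
    _ = ν Sᶜ + ∫⁻ x in S, P x Sᶜ ∂Q := by rw [setLIntegral_one, add_comm]

lemma bind_iterKernel_apply_compl_le [IsMarkovKernel P] (hQ : P ∘ₘ Q = Q)
    (hS : MeasurableSet S) (k : ℕ) (hν : ν ≤ Q) :
    (iterKernel P k ∘ₘ ν) Sᶜ ≤ ν Sᶜ + k * ∫⁻ x in S, P x Sᶜ ∂Q := by
  induction k generalizing ν with
  | zero => simp [iterKernel]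
  | succ k ih =>
    have hPν : P ∘ₘ ν ≤ Q := hQ ▸ Measure.bind_mono_measure P hν
    calc (iterKernel P (k + 1) ∘ₘ ν) Sᶜ
        ≤ (P ∘ₘ ν) Sᶜ + k * ∫⁻ x in S, P x Sᶜ ∂Q := by
          rw [bind_iterKernel_succ]; exact ih hPν
      _ ≤ ν Sᶜ + ∫⁻ x in S, P x Sᶜ ∂Q + k * ∫⁻ x in S, P x Sᶜ ∂Q := by
        gcongr; exact bind_apply_compl_le hν hS
      _ = ν Sᶜ + (k + 1 : ℕ) * ∫⁻ x in S, P x Sᶜ ∂Q := by push_cast; ring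

end Escape

lemma ofReal_quarter_le_apply_compl {Ω : Type} [MeasurableSpace Ω] {μ Q : Measure Ω}
    [IsProbabilityMeasure Q] {S : Set Ω} (hS : MeasurableSet S) (hQS : Q S ≤ 1 / 2)
    (hμQ : |(μ Sᶜ).toReal - (Q Sᶜ).toReal| ≤ 1 / 4) :
    ENNReal.ofReal (1 / 4) ≤ μ Sᶜ := by
  have hQS' : (Q S).toReal ≤ 1 / 2 := by
    simpa using ENNReal.toReal_mono (by norm_num) hQS
  have hQSc : (Q Sᶜ).toReal = 1 - (Q S).toReal := by
    rw [prob_compl_eq_one_sub hS, ENNReal.toReal_sub_of_le prob_le_one ENNReal.one_ne_top,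
      ENNReal.toReal_one]
  exact ENNReal.ofReal_le_of_le_toReal (by linarith [(abs_le.1 hμQ).1])

lemma ENNReal.ofReal_div_natCast_le_div {c : ℝ} {a b : ℝ≥0∞} {t : ℕ} (ht : t ≠ 0)
    (hb₀ : b ≠ 0) (hb : b ≠ ⊤) (h : ENNReal.ofReal c * b ≤ t * a) :
    ENNReal.ofReal (c / t) ≤ a / b := by
  rcases le_or_gt c 0 with hc | hc
  · simp [ENNReal.ofReal_of_nonpos (div_nonpos_of_nonpos_of_nonneg hc t.cast_nonneg)]
  rw [ENNReal.le_div_iff_mul_le (.inl hb₀) (.inl hb),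
    ENNReal.ofReal_div_of_pos (by positivity), ENNReal.ofReal_natCast, ← ENNReal.mul_div_right_comm,
    ENNReal.div_le_iff (by exact_mod_cast ht) (ENNReal.natCast_ne_top t), mul_comm a]
  exact h

/-- for a lazy reversible Markov chain that mixes to within total variation
distance 1/4 of its stationary distribution in `t` steps from any start, the conductance
of every set `S` with `0 < Q(S) ≤ 1/2` is at least `c/t` for an absolute constant `c`. -/
theorem conductance_ge_inv_mixing_time :
    ∃ c > (0 : ℝ), ∀ (Ω : Type) (_ : MeasurableSpace Ω) (P : Kernel Ω Ω),
      IsMarkovKernel P → ∀ (Q : Measure Ω), IsProbabilityMeasure Q →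
      Q.bind P = Q →
      (∀ x, (1 : ℝ≥0∞) / 2 ≤ P x {x}) →
      (∀ A B : Set Ω, MeasurableSet A → MeasurableSet B →
        ∫⁻ x in A, P x B ∂Q = ∫⁻ x in B, P x A ∂Q) →
      ∀ t : ℕ, 1 ≤ t →
      (∀ (x : Ω) (A : Set Ω), MeasurableSet A →
        |((iterKernel P t x) A).toReal - (Q A).toReal| ≤ 1 / 4) →
      ∀ S : Set Ω, MeasurableSet S → 0 < Q S → Q S ≤ 1 / 2 →
        (∫⁻ x in S, P x Sᶜ ∂Q) / Q S ≥ ENNReal.ofReal (c / t) := by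
  refine ⟨1 / 4, by norm_num, fun Ω _ P _ Q _ hQ _ _ t ht hmix S hS hQS₀ hQS => ?_⟩
  have hescape : ENNReal.ofReal (1 / 4) * Q S ≤ (iterKernel P t ∘ₘ Q.restrict S) Sᶜ :=
    calc ENNReal.ofReal (1 / 4) * Q S = ∫⁻ _ in S, ENNReal.ofReal (1 / 4) ∂Q :=
          (setLIntegral_const _ _).symm
      _ ≤ ∫⁻ x in S, iterKernel P t x Sᶜ ∂Q :=
          lintegral_mono fun x => ofReal_quarter_le_apply_compl hS hQS (hmix x Sᶜ hS.compl)
      _ = (iterKernel P t ∘ₘ Q.restrict S) Sᶜ :=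
          (Measure.bind_apply hS.compl (Kernel.aemeasurable _)).symm
  have hflow := bind_iterKernel_apply_compl_le hQ hS t (Measure.restrict_le_self (s := S))
  rw [Measure.restrict_apply hS.compl, Set.compl_inter_self, measure_empty, zero_add] at hflow
  exact ENNReal.ofReal_div_natCast_le_div (by omega) hQS₀.ne' (measure_ne_top Q S)
    (hescape.trans hflow)
end

section
/- Let K be a convex body in ℝⁿ, S₁ ⊆ K measurable, S₂ = K ∖ S₁, and let P_x denote the one-step transition kernel of Coordinate Hit-and-Run on K. Define S₁' = {x ∈ S₁ : P_x(S₂) < 1/(2n)} and S₂' = {x ∈ S₂ : P_x(S₁) < 1/(2n)}. Then S₁' and S₂' are axis-disjoint. -/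
open MeasureTheory Set
open scoped ENNReal

/-- One-step transition probability of Coordinate Hit-and-Run on `K` from `x` into `S`:
pick a uniform coordinate direction, then a uniform point of the chord through `x`. -/
noncomputable def charP (n : ℕ) (K S : Set (Fin n → ℝ)) (x : Fin n → ℝ) : ℝ≥0∞ :=
  (n : ℝ≥0∞)⁻¹ * ∑ j : Fin n,
    volume {t : ℝ | x + t • (Pi.single j 1 : Fin n → ℝ) ∈ S} /
      volume {t : ℝ | x + t • (Pi.single j 1 : Fin n → ℝ) ∈ K}

/-!
If `p ∈ S₁'` and `q ∈ S₂'` lay on a common chord parallel to `e_i`, that chord would have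
positive length (`K` is convex and `p ≠ q`) and finite length (`K` is bounded), and it is
covered by `S₁` and `S₂ = K \ S₁`. The `i`-th terms of `P_q(S₁)` and `P_p(S₂)` are both computed
on this chord, by translation invariance of Lebesgue measure, so they sum to at least `1/n`,
which contradicts `P_q(S₁), P_p(S₂) < 1/(2n)`.
-/

section AxisLine

variable {n : ℕ}

/-- The sets measured in `charP` are, definitionally, the preimages `axisLine x j ⁻¹' S`. -/
def axisLine (x : Fin n → ℝ) (i : Fin n) (t : ℝ) : Fin n → ℝ :=
  x + t • Pi.single i 1

lemma axisLine_sub_eq {p q : Fin n → ℝ} {i : Fin n} (hpq : ∀ j ≠ i, p j = q j) :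
    axisLine q i (p i - q i) = p := by
  funext j
  by_cases hj : j = i
  · subst hj; simp [axisLine]
  · simp [axisLine, hj, hpq j hj]

lemma axisLine_axisLine (x : Fin n → ℝ) (i : Fin n) (s t : ℝ) :
    axisLine (axisLine x i s) i t = axisLine x i (s + t) := by
  simp only [axisLine, add_smul, add_assoc]

lemma volume_axisLine_preimage_eq {p q : Fin n → ℝ} {i : Fin n} (hpq : ∀ j ≠ i, p j = q j)
    (S : Set (Fin n → ℝ)) :
    volume (axisLine p i ⁻¹' S) = volume (axisLine q i ⁻¹' S) := by
  have h : axisLine p i ⁻¹' S = (fun t => (p i - q i) + t) ⁻¹' (axisLine q i ⁻¹' S) := by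
    ext t; simp only [mem_preimage, ← axisLine_axisLine, axisLine_sub_eq hpq]
  rw [h, measure_preimage_add]

lemma isometry_axisLine (x : Fin n → ℝ) (i : Fin n) : Isometry (axisLine x i) :=
  isometry_iff_dist_eq.2 fun s t => by
    simp [axisLine, dist_eq_norm, ← sub_smul, norm_smul, Pi.norm_single]

lemma volume_axisLine_preimage_ne_top {K : Set (Fin n → ℝ)} (hK : Bornology.IsBounded K)
    (x : Fin n → ℝ) (i : Fin n) : volume (axisLine x i ⁻¹' K) ≠ ∞ :=
  ((isometry_axisLine x i).antilipschitz.isBounded_preimage hK).measure_lt_top.ne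

lemma Convex.axisLine_preimage {K : Set (Fin n → ℝ)} (hK : Convex ℝ K) (x : Fin n → ℝ)
    (i : Fin n) : Convex ℝ (axisLine x i ⁻¹' K) :=
  (hK.translate_preimage_right x).is_linear_preimage (IsLinearMap.isLinearMap_smul' _)

lemma volume_axisLine_preimage_pos {K : Set (Fin n → ℝ)} (hK : Convex ℝ K) {p q : Fin n → ℝ}
    (hp : p ∈ K) (hq : q ∈ K) {i : Fin n} (hpq : ∀ j ≠ i, p j = q j) (hne : p ≠ q) :
    0 < volume (axisLine p i ⁻¹' K) := by
  have hd : q i - p i ≠ 0 := fun h =>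
    hne (funext fun j => if hj : j = i then hj ▸ (sub_eq_zero.1 h).symm else hpq j hj)
  have h0 : (0 : ℝ) ∈ axisLine p i ⁻¹' K := by simpa [axisLine] using hp
  have hd' : q i - p i ∈ axisLine p i ⁻¹' K := by
    rwa [mem_preimage, axisLine_sub_eq fun j hj => (hpq j hj).symm]
  have hsub : uIcc 0 (q i - p i) ⊆ axisLine p i ⁻¹' K :=
    segment_eq_uIcc (𝕜 := ℝ) 0 (q i - p i) ▸ (hK.axisLine_preimage p i).segment_subset h0 hd'
  refine lt_of_lt_of_le ?_ (measure_mono hsub)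
  simpa [Real.volume_interval] using hd

lemma inv_mul_div_le_charP (K S : Set (Fin n → ℝ)) (x : Fin n → ℝ) (i : Fin n) :
    (n : ℝ≥0∞)⁻¹ * (volume (axisLine x i ⁻¹' S) / volume (axisLine x i ⁻¹' K)) ≤
      charP n K S x := by
  unfold charP
  gcongr
  exact Finset.single_le_sum (f := fun j => volume (axisLine x j ⁻¹' S) /
    volume (axisLine x j ⁻¹' K)) (fun j _ => zero_le) (Finset.mem_univ i)

end AxisLine

lemma ENNReal.one_le_div_add_div {a b c : ℝ≥0∞} (hc₀ : c ≠ 0) (hc : c ≠ ∞) (h : c ≤ a + b) :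
    1 ≤ a / c + b / c := by
  rw [ENNReal.div_add_div_same, ← ENNReal.div_self hc₀ hc]
  exact ENNReal.div_le_div_right h c

lemma ENNReal.inv_two_mul_add_inv_two_mul (a : ℝ≥0∞) : (2 * a)⁻¹ + (2 * a)⁻¹ = a⁻¹ := by
  rw [ENNReal.mul_inv (Or.inl two_ne_zero) (Or.inl ENNReal.ofNat_ne_top), ← add_mul,
    ENNReal.inv_two_add_inv_two, one_mul]

theorem inv_le_charP_add_charP {n : ℕ} {K S T : Set (Fin n → ℝ)} (hK : Convex ℝ K)
    (hKb : Bornology.IsBounded K) (hKST : K ⊆ S ∪ T) {p q : Fin n → ℝ} (hp : p ∈ K)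
    (hq : q ∈ K) (hne : p ≠ q) {i : Fin n} (hpq : ∀ j ≠ i, p j = q j) :
    (n : ℝ≥0∞)⁻¹ ≤ charP n K S q + charP n K T p := by
  set L := axisLine p i
  have hcover : volume (L ⁻¹' K) ≤ volume (L ⁻¹' S) + volume (L ⁻¹' T) :=
    (measure_mono (preimage_mono hKST)).trans (measure_union_le _ _)
  calc (n : ℝ≥0∞)⁻¹ = (n : ℝ≥0∞)⁻¹ * 1 := (mul_one _).symm
    _ ≤ (n : ℝ≥0∞)⁻¹ * (volume (L ⁻¹' S) / volume (L ⁻¹' K) +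
          volume (L ⁻¹' T) / volume (L ⁻¹' K)) := by
        gcongr
        exact ENNReal.one_le_div_add_div (volume_axisLine_preimage_pos hK hp hq hpq hne).ne'
          (volume_axisLine_preimage_ne_top hKb p i) hcover
    _ = (n : ℝ≥0∞)⁻¹ * (volume (axisLine q i ⁻¹' S) / volume (axisLine q i ⁻¹' K)) +
          (n : ℝ≥0∞)⁻¹ * (volume (L ⁻¹' T) / volume (L ⁻¹' K)) := by
        rw [mul_add, volume_axisLine_preimage_eq hpq S, volume_axisLine_preimage_eq hpq K]
    _ ≤ charP n K S q + charP n K T p :=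
        add_le_add (inv_mul_div_le_charP K S q i) (inv_mul_div_le_charP K T p i)

theorem char_low_escape_sets_axisDisjoint_general (n : ℕ) (K : Set (Fin n → ℝ))
    (hconv : Convex ℝ K) (hcomp : IsCompact K)
    (S₁ : Set (Fin n → ℝ)) (hS₁K : S₁ ⊆ K)
    (S₂ : Set (Fin n → ℝ)) (hS₂ : S₂ = K \ S₁) :
    AxisDisjoint {x ∈ S₁ | charP n K S₂ x < (2 * (n : ℝ≥0∞))⁻¹}
      {x ∈ S₂ | charP n K S₁ x < (2 * (n : ℝ≥0∞))⁻¹} := by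
  subst hS₂
  rintro p ⟨hp₁, hpP⟩ q ⟨hq₂, hqP⟩ ⟨i, hpq⟩
  have hne : p ≠ q := by rintro rfl; exact hq₂.2 hp₁
  have hcover : K ⊆ S₁ ∪ K \ S₁ := by rw [union_sdiff_self]; exact subset_union_right
  have hlow := ENNReal.add_lt_add hqP hpP
  rw [ENNReal.inv_two_mul_add_inv_two_mul] at hlow
  exact (inv_le_charP_add_charP hconv hcomp.isBounded hcover (hS₁K hp₁) hq₂.1 hne hpq).not_gt hlow

/-- for a convex body `K`, a measurable `S₁ ⊆ K` with complement
`S₂ = K \ S₁`, the sets of points of `S₁` (resp. `S₂`) whose one-step CHAR escape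
probability into the other side is `< 1/(2n)` are axis-disjoint. -/
theorem char_low_escape_sets_axisDisjoint (n : ℕ) (K : Set (Fin n → ℝ))
    (hconv : Convex ℝ K) (hcomp : IsCompact K) (hint : (interior K).Nonempty)
    (S₁ : Set (Fin n → ℝ)) (hS₁ : MeasurableSet S₁) (hS₁K : S₁ ⊆ K)
    (S₂ : Set (Fin n → ℝ)) (hS₂ : S₂ = K \ S₁) :
    AxisDisjoint {x ∈ S₁ | charP n K S₂ x < (2 * (n : ℝ≥0∞))⁻¹}
      {x ∈ S₂ | charP n K S₁ x < (2 * (n : ℝ≥0∞))⁻¹} :=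
  char_low_escape_sets_axisDisjoint_general n K hconv hcomp S₁ hS₁K S₂ hS₂
end
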